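/- Let F(x) ∈ 𝓞[x] be a monic irreducible polynomial with root θ ∈ K̄, of depth r, with Okutsu frame [F_1, …, F_r] and invariants m_i, μ_i. Let h(x) ∈ 𝓞[x] be a monic irreducible polynomial of degree m, and let δ_F(h) = max{ v(θ − β) : β ∈ K̄ a root of h(x) }. Then, for any 1 ≤ i ≤ r: (i) if δ_F(h) < μ_i then v(h(θ)) < (m/m_i) · v(F_i(θ)); (ii) if δ_F(h) = μ_i then v(h(θ)) = (m/m_i) · v(F_i(θ)); (iii) if δ_F(h) > μ_i then v(h(θ)) > (m/m_i) · v(F_i(θ)). -/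

import Mathlib

open Polynomial

noncomputable section

/-- A local field `K` of characteristic zero, presented through the canonical extension `v`
of its normalized discrete valuation (additively written, `v(K*) = ℤ`) to a fixed algebraic
closure of `K`.  The axioms state that `v` is an additive valuation on the algebraic closure,
that its restriction to `K` is a surjective discrete valuation onto `ℤ` (plus `⊤` at `0`),
that it is invariant under `K`-automorphisms (a property of the canonical extension), that
`K` is complete and that its residue field is finite. -/
structure OkutsuSetup (K : Type) [Field K] [CharZero K] : Type where
  v : AlgebraicClosure K → WithTop ℚ
  v_eq_top_iff : ∀ x, v x = ⊤ ↔ x = 0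
  v_mul : ∀ x y, v (x * y) = v x + v y
  v_min_le_add : ∀ x y, min (v x) (v y) ≤ v (x + y)
  v_neg : ∀ x, v (-x) = v x
  v_one : v 1 = 0
  v_base_int : ∀ x : K, x ≠ 0 →
    ∃ k : ℤ, v (algebraMap K (AlgebraicClosure K) x) = ((k : ℚ) : WithTop ℚ)
  v_base_one : ∃ x : K, v (algebraMap K (AlgebraicClosure K) x) = ((1 : ℚ) : WithTop ℚ)
  v_aut_invariant : ∀ (M : IntermediateField K (AlgebraicClosure K)) (σ : ↥M ≃ₐ[K] ↥M)
    (x : ↥M), v ((σ x : ↥M) : AlgebraicClosure K) = v ((x : ↥M) : AlgebraicClosure K)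
  complete : ∀ a : ℕ → K,
    (∀ N : ℚ, ∃ M : ℕ, ∀ p q : ℕ, M ≤ p → M ≤ q →
      ((N : ℚ) : WithTop ℚ) < v (algebraMap K (AlgebraicClosure K) (a p - a q))) →
    ∃ b : K, ∀ N : ℚ, ∃ M : ℕ, ∀ p : ℕ, M ≤ p →
      ((N : ℚ) : WithTop ℚ) < v (algebraMap K (AlgebraicClosure K) (a p - b))
  finite_residue : ∃ T : Finset K, ∀ x : K,
    0 ≤ v (algebraMap K (AlgebraicClosure K) x) →
    ∃ y ∈ T, 0 < v (algebraMap K (AlgebraicClosure K) (x - y))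

namespace OkutsuSetup

variable {K : Type} [Field K] [CharZero K]

/-- The valuation of `K` itself. -/
def vK (S : OkutsuSetup K) (x : K) : WithTop ℚ :=
  S.v (algebraMap K (AlgebraicClosure K) x)

/-- The ring of integers `𝓞` of `K`. -/
def integers (S : OkutsuSetup K) : Subring K where
  carrier := {x : K | 0 ≤ S.vK x}
  zero_mem' := by
    show (0 : WithTop ℚ) ≤ S.vK 0
    unfold vK
    rw [map_zero, (S.v_eq_top_iff 0).mpr rfl]
    exact le_top
  one_mem' := by
    show (0 : WithTop ℚ) ≤ S.vK 1
    unfold vK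
    rw [map_one, S.v_one]
  add_mem' := by
    intro a b ha hb
    show (0 : WithTop ℚ) ≤ S.vK (a + b)
    unfold vK
    rw [map_add]
    exact le_trans (le_min ha hb) (S.v_min_le_add _ _)
  mul_mem' := by
    intro a b ha hb
    show (0 : WithTop ℚ) ≤ S.vK (a * b)
    unfold vK
    rw [map_mul, S.v_mul]
    exact add_nonneg ha hb
  neg_mem' := by
    intro a ha
    show (0 : WithTop ℚ) ≤ S.vK (-a)
    unfold vK
    rw [map_neg, S.v_neg]
    exact ha

/-- The maximal ideal `𝔪` of the ring of integers of `K`. -/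
def maximalIdeal (S : OkutsuSetup K) : Ideal S.integers where
  carrier := {x : S.integers | 0 < S.vK (x : K)}
  zero_mem' := by
    show (0 : WithTop ℚ) < S.vK ((0 : S.integers) : K)
    have h0 : ((0 : S.integers) : K) = (0 : K) := rfl
    rw [h0]
    unfold vK
    rw [map_zero, (S.v_eq_top_iff 0).mpr rfl]
    exact WithTop.coe_lt_top 0
  add_mem' := by
    intro a b ha hb
    show (0 : WithTop ℚ) < S.vK ((a : K) + (b : K))
    refine lt_of_lt_of_le (lt_min ha hb) ?_
    unfold vK
    rw [map_add]
    exact S.v_min_le_add _ _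
  smul_mem' := by
    intro c x hx
    show (0 : WithTop ℚ) < S.vK ((c : K) * (x : K))
    unfold vK
    rw [map_mul, S.v_mul]
    calc (0 : WithTop ℚ) < S.v (algebraMap K (AlgebraicClosure K) (x : K)) := hx
    _ ≤ _ + _ := le_add_of_nonneg_left c.2

/-- The residue field `𝓞/𝔪` of `K`. -/
abbrev Residue (S : OkutsuSetup K) : Type :=
  S.integers ⧸ S.maximalIdeal

/-- The residue characteristic of `K`. -/
def resChar (S : OkutsuSetup K) : ℕ :=
  ringChar S.Residue

/-- Reduction of a polynomial with integer coefficients modulo `𝔪`. -/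
def reduce (S : OkutsuSetup K) (F : Polynomial S.integers) : Polynomial S.Residue :=
  F.map (Ideal.Quotient.mk S.maximalIdeal)

/-- Evaluation of a polynomial with coefficients in `𝓞` at a point of the algebraic
closure of `K`. -/
def evalK (S : OkutsuSetup K) (F : Polynomial S.integers) (θ : AlgebraicClosure K) :
    AlgebraicClosure K :=
  Polynomial.aeval θ (F.map S.integers.subtype)

/-- `v(g)` for a polynomial `g`: the minimum of the valuations of its coefficients. -/
def vPoly (S : OkutsuSetup K) (g : Polynomial S.integers) : WithTop ℚ :=
  (Finset.range (g.natDegree + 1)).inf fun i => S.vK ((g.coeff i : K))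

/-- The ramification index `e(E/K)` of a finite subextension `E` of `K̄/K`: the least
positive integer `e` such that all values of `v` on `E*` lie in `(1/e)ℤ`. -/
def ramIdx (S : OkutsuSetup K) (E : IntermediateField K (AlgebraicClosure K)) : ℕ :=
  sInf {e : ℕ | 0 < e ∧ ∀ x ∈ E, x ≠ (0 : AlgebraicClosure K) →
    ∃ k : ℤ, S.v x = (((k : ℚ) / (e : ℚ) : ℚ) : WithTop ℚ)}

/-- The residual degree `f(E/K)` of a finite subextension `E` of `K̄/K`; since `K` is a
complete discretely valued field, `[E : K] = e(E/K)·f(E/K)`. -/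
def resDeg (S : OkutsuSetup K) (E : IntermediateField K (AlgebraicClosure K)) : ℕ :=
  Module.finrank K E / S.ramIdx E

/-- A subextension `E/K` is tamely ramified when its ramification index is prime to the
residue characteristic of `K`. -/
def IsTame (S : OkutsuSetup K) (E : IntermediateField K (AlgebraicClosure K)) : Prop :=
  Nat.Coprime (S.ramIdx E) S.resChar

/-- The Okutsu invariants `m_0 = 1 ≤ m_1 < ⋯ < m_r < m_{r+1} = n` and
`μ_0 = 0 < μ_1 < ⋯ < μ_r < μ_{r+1} = ∞` of a monic irreducible polynomial of degree `n`
with root `θ`:  `m i` is the least `[K(η):K]` over `η` with `v(θ-η) > μ (i-1)`, and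
`μ i` is the greatest value of `v(θ-η)` over `η` with `[K(η):K] = m i`.
`r` is the depth: the number of indices `i ≥ 1` with `m i < n`. -/
structure OkutsuData (S : OkutsuSetup K) (θ : AlgebraicClosure K) (n : ℕ) : Type where
  r : ℕ
  m : ℕ → ℕ
  μ : ℕ → WithTop ℚ
  m_zero : m 0 = 1
  mu_zero : μ 0 = 0
  m_isLeast : ∀ i, 1 ≤ i → i ≤ r + 1 →
    IsLeast {d : ℕ | ∃ η : AlgebraicClosure K,
      (minpoly K η).natDegree = d ∧ μ (i - 1) < S.v (θ - η)} (m i)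
  mu_isGreatest : ∀ i, 1 ≤ i → i ≤ r + 1 →
    IsGreatest {c : WithTop ℚ | ∃ η : AlgebraicClosure K,
      (minpoly K η).natDegree = m i ∧ S.v (θ - η) = c} (μ i)
  m_lt_n : ∀ i, 1 ≤ i → i ≤ r → m i < n
  m_last : m (r + 1) = n

/-- `[F_1, …, F_r]` is an Okutsu frame of the monic irreducible polynomial with root `θ`
and Okutsu invariants `D`: for each `1 ≤ i ≤ r`, `F_i` is the minimal polynomial of some
`α_i ∈ K̄` with `[K(α_i):K] = m_i` and `v(θ - α_i) = μ_i`. -/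
def IsFrame (S : OkutsuSetup K) {θ : AlgebraicClosure K} {n : ℕ} (D : OkutsuData S θ n)
    (Fr : ℕ → Polynomial S.integers) : Prop :=
  ∀ i, 1 ≤ i → i ≤ D.r → ∃ α : AlgebraicClosure K,
    (minpoly K α).natDegree = D.m i ∧ S.v (θ - α) = D.μ i ∧
      (Fr i).map S.integers.subtype = minpoly K α

/-- `φ` is a Montes approximation to the monic irreducible polynomial `F`:  a monic
irreducible polynomial of the same degree `n` having a root `α` with `v(θ - α) > μ_r`,
where `θ` is a root of `F`. -/
def IsMontesApprox (S : OkutsuSetup K) (F φ : Polynomial S.integers) : Prop :=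
  φ.Monic ∧ Irreducible (φ.map S.integers.subtype) ∧ φ.natDegree = F.natDegree ∧
    ∃ θ : AlgebraicClosure K, S.evalK F θ = 0 ∧
      ∃ D : OkutsuData S θ F.natDegree, ∃ α : AlgebraicClosure K,
        S.evalK φ α = 0 ∧ D.μ D.r < S.v (θ - α)

end OkutsuSetup

/-!
Write `f_x` for the minimal polynomial of `x ∈ K̄`. Both valuations in the statement are sums
over the conjugates `θ'` of `θ`: `v(f_x(y)) = Σ v(y - x')` over the conjugates `x'` of `x`, and
`deg f_θ · v(f_γ(θ)) = deg f_γ · v(f_θ(γ))`, both sides being the valuation of the resultant.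
Hence `v(h(θ))` and `(m/m_i)·v(F_i(θ))` compare as `v(f_θ(β))` and `v(f_θ(α))` do, where `β` is
a root of `h` with `v(θ - β) = δ` and `α` a root of `F_i` with `v(θ - α) = μ_i`, and it suffices
to compare `v(β - θ')` with `v(α - θ')` for each `θ' = σθ`. If `δ ≤ μ_i`, then
`v(σ⁻¹α - σ⁻¹β) = v(α - β) ≥ δ ≥ v(θ - σ⁻¹β)` by maximality of `δ`, so the ultrametric
inequality gives `v(θ - σ⁻¹β) ≤ v(θ - σ⁻¹α)`; the case `μ_i ≤ δ` is symmetric, using the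
maximality of `μ_i` among elements of degree `m_i`, and the inequality is strict at `θ' = θ`.
-/

section WithTopArith

variable {α : Type*} [AddCommMonoid α] [LinearOrder α] [IsOrderedCancelAddMonoid α]

theorem WithTop.nsmul_strictMono {n : ℕ} (hn : n ≠ 0) :
    StrictMono fun x : WithTop α => n • x := by
  obtain ⟨k, rfl⟩ := Nat.exists_eq_succ_of_ne_zero hn
  intro x y hxy
  lift x to α using hxy.ne_top
  induction y with
  | top => exact WithTop.coe_lt_top _
  | coe y =>
    simp only [← WithTop.coe_nsmul, WithTop.coe_lt_coe] at hxy ⊢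
    exact nsmul_lt_nsmul_right hn hxy

theorem WithTop.lt_iff_lt_of_nsmul_eq {p q : ℕ} (hp : p ≠ 0) (hq : q ≠ 0)
    {x x' y y' : WithTop α} (hx : p • x = q • y) (hx' : p • x' = q • y') :
    x < x' ↔ y < y' := by
  rw [← (WithTop.nsmul_strictMono hp).lt_iff_lt, hx, hx',
    (WithTop.nsmul_strictMono hq).lt_iff_lt]

theorem WithTop.eq_iff_eq_of_nsmul_eq {p q : ℕ} (hp : p ≠ 0) (hq : q ≠ 0)
    {x x' y y' : WithTop α} (hx : p • x = q • y) (hx' : p • x' = q • y') :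
    x = x' ↔ y = y' := by
  rw [← (WithTop.nsmul_strictMono hp).injective.eq_iff, hx, hx',
    (WithTop.nsmul_strictMono hq).injective.eq_iff]

theorem Multiset.sum_map_lt_sum_map_of_ne_top {ι : Type*} {s : Multiset ι}
    {f g : ι → WithTop α} (hle : ∀ i ∈ s, f i ≤ g i) {a : ι} (ha : a ∈ s) (hlt : f a < g a)
    (hfin : (s.map f).sum ≠ ⊤) : (s.map f).sum < (s.map g).sum := by
  obtain ⟨t, rfl⟩ := Multiset.exists_cons_of_mem ha
  simp only [Multiset.map_cons, Multiset.sum_cons] at hfin ⊢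
  exact WithTop.add_lt_add_of_lt_of_le (WithTop.add_ne_top.1 hfin).2 hlt
    (Multiset.sum_map_le_sum_map f g fun i hi => hle i (Multiset.mem_cons_of_mem hi))

end WithTopArith

section Conjugates

variable {K L : Type*} [Field K] [Field L] [Algebra K L] [Normal K L]

theorem minpoly.exists_algEquiv_of_mem_aroots {θ θ' : L} (hθ' : θ' ∈ (minpoly K θ).aroots L) :
    ∃ σ : L ≃ₐ[K] L, σ θ = θ' :=
  minpoly.exists_algEquiv_of_root' (Algebra.IsAlgebraic.isAlgebraic θ)
    (Polynomial.mem_aroots.1 hθ').2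

theorem minpoly.sum_map_aroots_of_invariant [IsAlgClosed L] {M : Type*} [AddCommMonoid M]
    (θ : L) {φ : L → M} (hφ : ∀ (σ : L ≃ₐ[K] L) x, φ (σ x) = φ x) :
    (((minpoly K θ).aroots L).map φ).sum = (minpoly K θ).natDegree • φ θ := by
  have hconst : ∀ θ' ∈ (minpoly K θ).aroots L, φ θ' = φ θ := by
    intro θ' hθ'
    obtain ⟨σ, rfl⟩ := minpoly.exists_algEquiv_of_mem_aroots hθ'
    exact hφ σ θ
  rw [Multiset.map_congr rfl hconst, Multiset.map_const', Multiset.sum_replicate,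
    IsAlgClosed.card_aroots_eq_natDegree]

end Conjugates

namespace OkutsuSetup

variable {K : Type} [Field K] [CharZero K] (S : OkutsuSetup K)

theorem v_sub_comm (x y : AlgebraicClosure K) : S.v (x - y) = S.v (y - x) := by
  rw [← S.v_neg, neg_sub]

theorem min_v_sub_le_v_sub (x y z : AlgebraicClosure K) :
    min (S.v (x - y)) (S.v (y - z)) ≤ S.v (x - z) := by
  simpa using S.v_min_le_add (x - y) (y - z)

theorem v_algEquiv (σ : AlgebraicClosure K ≃ₐ[K] AlgebraicClosure K) (x : AlgebraicClosure K) :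
    S.v (σ x) = S.v x :=
  S.v_aut_invariant ⊤
    ((IntermediateField.topEquiv.trans σ).trans IntermediateField.topEquiv.symm) ⟨x, trivial⟩

theorem v_multiset_prod (s : Multiset (AlgebraicClosure K)) : S.v s.prod = (s.map S.v).sum := by
  induction s using Multiset.induction_on with
  | empty => simpa using S.v_one
  | cons a t ih => simp [S.v_mul, ih]

theorem v_aeval_eq_sum_aroots {g : K[X]} (hg : g.Monic) (x : AlgebraicClosure K) :
    S.v (aeval x g) = ((g.aroots (AlgebraicClosure K)).map fun ρ => S.v (x - ρ)).sum := by
  rw [(IsAlgClosed.splits _).aeval_eq_prod_aroots_of_monic hg, v_multiset_prod, Multiset.map_map]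
  rfl

theorem v_aeval_algEquiv (g : K[X]) (σ : AlgebraicClosure K ≃ₐ[K] AlgebraicClosure K)
    (x : AlgebraicClosure K) : S.v (aeval (σ x) g) = S.v (aeval x g) := by
  rw [Polynomial.aeval_algHom_apply]
  exact S.v_algEquiv σ _

theorem natDegree_nsmul_v_aeval_minpoly (θ γ : AlgebraicClosure K) :
    (minpoly K θ).natDegree • S.v (aeval θ (minpoly K γ)) =
      (minpoly K γ).natDegree • S.v (aeval γ (minpoly K θ)) := by
  rw [← minpoly.sum_map_aroots_of_invariant (φ := fun x => S.v (aeval x (minpoly K γ))) θ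
      (S.v_aeval_algEquiv _),
    ← minpoly.sum_map_aroots_of_invariant (φ := fun x => S.v (aeval x (minpoly K θ))) γ
      (S.v_aeval_algEquiv _)]
  simp only [S.v_aeval_eq_sum_aroots (minpoly.monic (Algebra.IsIntegral.isIntegral _))]
  rw [Multiset.sum_map_sum_map]
  simp only [S.v_sub_comm]

theorem v_sub_le_v_sub_of_mem_aroots {θ α β : AlgebraicClosure K}
    (hβ : ∀ σ : AlgebraicClosure K ≃ₐ[K] AlgebraicClosure K, S.v (θ - σ β) ≤ S.v (θ - β))
    (hle : S.v (θ - β) ≤ S.v (θ - α)) {θ' : AlgebraicClosure K}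
    (hθ' : θ' ∈ (minpoly K θ).aroots (AlgebraicClosure K)) :
    S.v (β - θ') ≤ S.v (α - θ') := by
  obtain ⟨σ, rfl⟩ := minpoly.exists_algEquiv_of_mem_aroots hθ'
  have hpull : ∀ x, S.v (x - σ θ) = S.v (θ - σ.symm x) := fun x => by
    rw [← S.v_algEquiv σ.symm, map_sub, σ.symm_apply_apply, S.v_sub_comm]
  have hαβ : S.v (θ - β) ≤ S.v (σ.symm β - σ.symm α) := calc
    S.v (θ - β) = min (S.v (β - θ)) (S.v (θ - α)) := by rw [S.v_sub_comm β, min_eq_left hle]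
    _ ≤ S.v (β - α) := S.min_v_sub_le_v_sub β θ α
    _ = S.v (σ.symm β - σ.symm α) := by rw [← map_sub, S.v_algEquiv]
  calc S.v (β - σ θ) = S.v (θ - σ.symm β) := hpull β
    _ = min (S.v (θ - σ.symm β)) (S.v (σ.symm β - σ.symm α)) :=
      (min_eq_left ((hβ σ.symm).trans hαβ)).symm
    _ ≤ S.v (θ - σ.symm α) := S.min_v_sub_le_v_sub _ _ _
    _ = S.v (α - σ θ) := (hpull α).symm

theorem v_aeval_minpoly_le {θ α β : AlgebraicClosure K}
    (hβ : ∀ σ : AlgebraicClosure K ≃ₐ[K] AlgebraicClosure K, S.v (θ - σ β) ≤ S.v (θ - β))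
    (hle : S.v (θ - β) ≤ S.v (θ - α)) :
    S.v (aeval β (minpoly K θ)) ≤ S.v (aeval α (minpoly K θ)) := by
  have hmonic := minpoly.monic (Algebra.IsIntegral.isIntegral (R := K) θ)
  rw [S.v_aeval_eq_sum_aroots hmonic, S.v_aeval_eq_sum_aroots hmonic]
  exact Multiset.sum_map_le_sum_map _ _ fun θ' => S.v_sub_le_v_sub_of_mem_aroots hβ hle

theorem v_aeval_minpoly_lt {θ α β : AlgebraicClosure K}
    (hβ : ∀ σ : AlgebraicClosure K ≃ₐ[K] AlgebraicClosure K, S.v (θ - σ β) ≤ S.v (θ - β))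
    (hlt : S.v (θ - β) < S.v (θ - α)) :
    S.v (aeval β (minpoly K θ)) < S.v (aeval α (minpoly K θ)) := by
  have hmonic := minpoly.monic (Algebra.IsIntegral.isIntegral (R := K) θ)
  have hθ : θ ∈ (minpoly K θ).aroots (AlgebraicClosure K) :=
    Polynomial.mem_aroots.2 ⟨hmonic.ne_zero, minpoly.aeval K θ⟩
  have hβ_fin : S.v (aeval β (minpoly K θ)) ≠ ⊤ := by
    intro htop
    have hβroot : β ∈ (minpoly K θ).aroots (AlgebraicClosure K) :=
      Polynomial.mem_aroots.2 ⟨hmonic.ne_zero, (S.v_eq_top_iff _).1 htop⟩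
    obtain ⟨σ, rfl⟩ := minpoly.exists_algEquiv_of_mem_aroots hβroot
    have := hβ σ.symm
    rw [σ.symm_apply_apply, sub_self, (S.v_eq_top_iff 0).2 rfl, top_le_iff] at this
    exact not_top_lt (this ▸ hlt)
  rw [S.v_aeval_eq_sum_aroots hmonic] at hβ_fin
  rw [S.v_aeval_eq_sum_aroots hmonic, S.v_aeval_eq_sum_aroots hmonic]
  refine Multiset.sum_map_lt_sum_map_of_ne_top
    (fun θ' => S.v_sub_le_v_sub_of_mem_aroots hβ hlt.le) hθ ?_ hβ_fin
  rwa [S.v_sub_comm, S.v_sub_comm α]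

theorem v_aeval_minpoly_trichotomy {θ α β : AlgebraicClosure K}
    (hα : ∀ σ : AlgebraicClosure K ≃ₐ[K] AlgebraicClosure K, S.v (θ - σ α) ≤ S.v (θ - α))
    (hβ : ∀ σ : AlgebraicClosure K ≃ₐ[K] AlgebraicClosure K, S.v (θ - σ β) ≤ S.v (θ - β))
    {m k : ℕ} (hm : (minpoly K β).natDegree = m) (hk : (minpoly K α).natDegree = k) {c : ℚ}
    (hc : S.v (aeval θ (minpoly K α)) = c) :
    (S.v (θ - β) < S.v (θ - α) →
      S.v (aeval θ (minpoly K β)) < (((m : ℚ) / (k : ℚ) * c : ℚ) : WithTop ℚ)) ∧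
    (S.v (θ - β) = S.v (θ - α) →
      S.v (aeval θ (minpoly K β)) = (((m : ℚ) / (k : ℚ) * c : ℚ) : WithTop ℚ)) ∧
    (S.v (θ - α) < S.v (θ - β) →
      (((m : ℚ) / (k : ℚ) * c : ℚ) : WithTop ℚ) < S.v (aeval θ (minpoly K β))) := by
  set n := (minpoly K θ).natDegree
  have hpos : ∀ x : AlgebraicClosure K, (minpoly K x).natDegree ≠ 0 := fun x =>
    (minpoly.natDegree_pos (Algebra.IsIntegral.isIntegral x)).ne'
  have hp : n * k ≠ 0 := Nat.mul_ne_zero (hpos θ) (hk ▸ hpos α)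
  have hq : m * k ≠ 0 := Nat.mul_ne_zero (hm ▸ hpos β) (hk ▸ hpos α)
  have hX : (n * k) • S.v (aeval θ (minpoly K β)) = (m * k) • S.v (aeval β (minpoly K θ)) := by
    rw [mul_nsmul, S.natDegree_nsmul_v_aeval_minpoly, hm, ← mul_nsmul]
  have hT : (n * k) • (((m : ℚ) / (k : ℚ) * c : ℚ) : WithTop ℚ) =
      (m * k) • S.v (aeval α (minpoly K θ)) := by
    have hk₀ : (k : ℚ) ≠ 0 := by exact_mod_cast hk ▸ hpos α
    have hcoef : (n * k) • ((m : ℚ) / k * c) = m • n • c := by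
      simp only [nsmul_eq_mul, Nat.cast_mul]
      field_simp
    rw [← WithTop.coe_nsmul, hcoef, WithTop.coe_nsmul, WithTop.coe_nsmul, ← hc,
      S.natDegree_nsmul_v_aeval_minpoly, hk, ← mul_nsmul']
  refine ⟨fun hlt => ?_, fun heq => ?_, fun hlt => ?_⟩
  · exact (WithTop.lt_iff_lt_of_nsmul_eq hp hq hX hT).2 (S.v_aeval_minpoly_lt hβ hlt)
  · exact (WithTop.eq_iff_eq_of_nsmul_eq hp hq hX hT).2 <|
      le_antisymm (S.v_aeval_minpoly_le hβ heq.le) (S.v_aeval_minpoly_le hα heq.ge)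
  · exact (WithTop.lt_iff_lt_of_nsmul_eq hp hq hT hX).2 (S.v_aeval_minpoly_lt hα hlt)

end OkutsuSetup

open OkutsuSetup in
theorem okutsu_stmt_12_general {K : Type} [Field K] [CharZero K] (S : OkutsuSetup K)
    (n : ℕ) (θ : AlgebraicClosure K) (D : OkutsuData S θ n)
    (Fr : ℕ → Polynomial S.integers) (hFr : S.IsFrame D Fr)
    (h : Polynomial S.integers) (hhmonic : h.Monic)
    (hhirr : Irreducible (h.map S.integers.subtype))
    (m : ℕ) (hhdeg : h.natDegree = m)
    (δ : WithTop ℚ)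
    (hδ : IsGreatest {c : WithTop ℚ | ∃ β : AlgebraicClosure K,
      S.evalK h β = 0 ∧ c = S.v (θ - β)} δ)
    (i : ℕ) (hi1 : 1 ≤ i) (hi2 : i ≤ D.r) :
    ∀ c : ℚ, S.v (S.evalK (Fr i) θ) = (c : WithTop ℚ) →
      (δ < D.μ i →
        S.v (S.evalK h θ) < ((((m : ℚ) / (D.m i : ℚ)) * c : ℚ) : WithTop ℚ)) ∧
      (δ = D.μ i →
        S.v (S.evalK h θ) = ((((m : ℚ) / (D.m i : ℚ)) * c : ℚ) : WithTop ℚ)) ∧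
      (D.μ i < δ →
        ((((m : ℚ) / (D.m i : ℚ)) * c : ℚ) : WithTop ℚ) < S.v (S.evalK h θ)) := by
  intro c hc
  obtain ⟨α, hαdeg, hαμ, hFrα⟩ := hFr i hi1 hi2
  obtain ⟨β, hβ, rfl⟩ := hδ.1
  have hhβ : h.map S.integers.subtype = minpoly K β :=
    minpoly.eq_of_irreducible_of_monic hhirr hβ (hhmonic.map _)
  have hβmax : ∀ σ : AlgebraicClosure K ≃ₐ[K] AlgebraicClosure K,
      S.v (θ - σ β) ≤ S.v (θ - β) := fun σ =>
    hδ.2 ⟨σ β, by simp [evalK, hhβ, Polynomial.aeval_algHom_apply], rfl⟩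
  have hαmax : ∀ σ : AlgebraicClosure K ≃ₐ[K] AlgebraicClosure K,
      S.v (θ - σ α) ≤ S.v (θ - α) := fun σ =>
    hαμ ▸ (D.mu_isGreatest i hi1 (by omega)).2 ⟨σ α, by rw [minpoly.algEquiv_eq, hαdeg], rfl⟩
  have hm : (minpoly K β).natDegree = m := by rw [← hhβ, hhmonic.natDegree_map, hhdeg]
  unfold evalK at hc ⊢
  rw [hFrα] at hc
  rw [hhβ, ← hαμ]
  exact S.v_aeval_minpoly_trichotomy hαmax hβmax hm hαdeg hc

open OkutsuSetup in
/-- Let `F ∈ 𝓞[x]` be monic irreducible with root `θ`, of depth `r`,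
with Okutsu frame `[F_1, …, F_r]` and invariants `m_i, μ_i`.  Let `h ∈ 𝓞[x]` be monic
irreducible of degree `m` and `δ_F(h) = max {v(θ - β) | β a root of h}`.  Then, for any
`1 ≤ i ≤ r` (writing `v(F_i(θ))` as a rational number `c`):
(i) `δ_F(h) < μ_i → v(h(θ)) < (m/m_i)·v(F_i(θ))`;
(ii) `δ_F(h) = μ_i → v(h(θ)) = (m/m_i)·v(F_i(θ))`;
(iii) `δ_F(h) > μ_i → v(h(θ)) > (m/m_i)·v(F_i(θ))`. -/
theorem okutsu_stmt_12 {K : Type} [Field K] [CharZero K] (S : OkutsuSetup K)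
    (F : Polynomial S.integers) (hFmonic : F.Monic)
    (hFirr : Irreducible (F.map S.integers.subtype))
    (n : ℕ) (hFdeg : F.natDegree = n)
    (θ : AlgebraicClosure K) (hθ : S.evalK F θ = 0)
    (D : OkutsuData S θ n)
    (Fr : ℕ → Polynomial S.integers) (hFr : S.IsFrame D Fr)
    (h : Polynomial S.integers) (hhmonic : h.Monic)
    (hhirr : Irreducible (h.map S.integers.subtype))
    (m : ℕ) (hhdeg : h.natDegree = m)
    (δ : WithTop ℚ)
    (hδ : IsGreatest {c : WithTop ℚ | ∃ β : AlgebraicClosure K,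
      S.evalK h β = 0 ∧ c = S.v (θ - β)} δ)
    (i : ℕ) (hi1 : 1 ≤ i) (hi2 : i ≤ D.r) :
    ∀ c : ℚ, S.v (S.evalK (Fr i) θ) = (c : WithTop ℚ) →
      (δ < D.μ i →
        S.v (S.evalK h θ) < ((((m : ℚ) / (D.m i : ℚ)) * c : ℚ) : WithTop ℚ)) ∧
      (δ = D.μ i →
        S.v (S.evalK h θ) = ((((m : ℚ) / (D.m i : ℚ)) * c : ℚ) : WithTop ℚ)) ∧
      (D.μ i < δ →
        ((((m : ℚ) / (D.m i : ℚ)) * c : ℚ) : WithTop ℚ) < S.v (S.evalK h θ)) :=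
  okutsu_stmt_12_general S n θ D Fr hFr h hhmonic hhirr m hhdeg δ hδ i hi1 hi2
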